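/- Let r ≥ 1 and let P = ℂ[y₁,…,y_r, z₁,…,z_r] be the polynomial ring in 2r variables over ℂ. Define ℂ-linear operators on P by D_i(p) = ∂p/∂y_i + z_i·p and E_i(p) = ∂p/∂z_i + y_i·p for 1 ≤ i ≤ r. Then P is the internal direct sum of the subspace Σ_{i=1}^r range(D_i) + Σ_{i=1}^r range(E_i) and the line ℂ·1: these subspaces have trivial intersection and together span P. -/

import Mathlib

open MvPolynomial Finsupp

namespace KoszulAux

noncomputable def v (m n : ℕ) : ℂ :=
  if m = n then (-1) ^ m * (m.factorial : ℂ) else 0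

lemma v_symm (m n : ℕ) : v m n = v n m := by
  unfold v
  by_cases h : m = n
  · subst h; rfl
  · rw [if_neg h, if_neg (Ne.symm h)]

lemma local_id (a b : ℕ) : (a : ℂ) * v (a - 1) b + v a (b + 1) = 0 := by
  unfold v
  match a with
  | 0 => simp
  | a + 1 =>
    by_cases h : a = b
    · subst h
      rw [if_pos (by simp), if_pos rfl]
      rw [pow_succ, Nat.factorial_succ]
      push_cast
      ring
    · rw [if_neg (by simpa using h), if_neg (by simpa using h)]
      ring

lemma local_id' (a b : ℕ) : (b : ℂ) * v a (b - 1) + v (a + 1) b = 0 := by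
  rw [v_symm a (b - 1), v_symm (a + 1) b]
  exact local_id b a

noncomputable def w (r : ℕ) (d : (Fin r ⊕ Fin r) →₀ ℕ) : ℂ :=
  ∏ i : Fin r, v (d (Sum.inl i)) (d (Sum.inr i))

lemma w_zero (r : ℕ) : w r 0 = 1 := by
  unfold w v; simp

lemma key_D (r : ℕ) (d : (Fin r ⊕ Fin r) →₀ ℕ) (i : Fin r) :
    (d (Sum.inl i) : ℂ) * w r (d - Finsupp.single (Sum.inl i) 1)
      + w r (d + Finsupp.single (Sum.inr i) 1) = 0 := by
  unfold w
  have e1 : ∀ d' : (Fin r ⊕ Fin r) →₀ ℕ,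
      (∏ j : Fin r, v (d' (Sum.inl j)) (d' (Sum.inr j)))
        = v (d' (Sum.inl i)) (d' (Sum.inr i))
          * ∏ j ∈ Finset.univ.erase i, v (d' (Sum.inl j)) (d' (Sum.inr j)) :=
    fun d' => (Finset.mul_prod_erase Finset.univ _ (Finset.mem_univ i)).symm
  rw [e1, e1]
  have hC : ∀ j ∈ Finset.univ.erase i,
      v ((d - Finsupp.single (Sum.inl i) 1 : (Fin r ⊕ Fin r) →₀ ℕ) (Sum.inl j))
        ((d - Finsupp.single (Sum.inl i) 1 : (Fin r ⊕ Fin r) →₀ ℕ) (Sum.inr j))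
      = v (d (Sum.inl j)) (d (Sum.inr j)) := by
    intro j hj
    have hji : j ≠ i := (Finset.mem_erase.mp hj).1
    rw [Finsupp.tsub_apply, Finsupp.tsub_apply,
      Finsupp.single_eq_of_ne' (by simp [Ne.symm hji]),
      Finsupp.single_eq_of_ne (by simp)]
    simp
  have hC' : ∀ j ∈ Finset.univ.erase i,
      v ((d + Finsupp.single (Sum.inr i) 1 : (Fin r ⊕ Fin r) →₀ ℕ) (Sum.inl j))
        ((d + Finsupp.single (Sum.inr i) 1 : (Fin r ⊕ Fin r) →₀ ℕ) (Sum.inr j))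
      = v (d (Sum.inl j)) (d (Sum.inr j)) := by
    intro j hj
    have hji : j ≠ i := (Finset.mem_erase.mp hj).1
    rw [Finsupp.add_apply, Finsupp.add_apply,
      Finsupp.single_eq_of_ne (by simp),
      Finsupp.single_eq_of_ne' (by simp [Ne.symm hji])]
    simp
  rw [Finset.prod_congr rfl hC, Finset.prod_congr rfl hC']
  have h1 : (d - Finsupp.single (Sum.inl i) 1 : (Fin r ⊕ Fin r) →₀ ℕ) (Sum.inl i)
      = d (Sum.inl i) - 1 := by
    rw [Finsupp.tsub_apply, Finsupp.single_eq_same]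
  have h2 : (d - Finsupp.single (Sum.inl i) 1 : (Fin r ⊕ Fin r) →₀ ℕ) (Sum.inr i)
      = d (Sum.inr i) := by
    rw [Finsupp.tsub_apply, Finsupp.single_eq_of_ne (by simp)]; simp
  have h3 : (d + Finsupp.single (Sum.inr i) 1 : (Fin r ⊕ Fin r) →₀ ℕ) (Sum.inl i)
      = d (Sum.inl i) := by
    rw [Finsupp.add_apply, Finsupp.single_eq_of_ne (by simp)]; simp
  have h4 : (d + Finsupp.single (Sum.inr i) 1 : (Fin r ⊕ Fin r) →₀ ℕ) (Sum.inr i)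
      = d (Sum.inr i) + 1 := by
    rw [Finsupp.add_apply, Finsupp.single_eq_same]
  rw [h1, h2, h3, h4]
  calc _ = ((d (Sum.inl i) : ℂ) * v (d (Sum.inl i) - 1) (d (Sum.inr i))
        + v (d (Sum.inl i)) (d (Sum.inr i) + 1))
        * ∏ j ∈ Finset.univ.erase i, v (d (Sum.inl j)) (d (Sum.inr j)) := by ring
    _ = 0 := by rw [local_id]; ring

lemma key_E (r : ℕ) (d : (Fin r ⊕ Fin r) →₀ ℕ) (i : Fin r) :
    (d (Sum.inr i) : ℂ) * w r (d - Finsupp.single (Sum.inr i) 1)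
      + w r (d + Finsupp.single (Sum.inl i) 1) = 0 := by
  unfold w
  have e1 : ∀ d' : (Fin r ⊕ Fin r) →₀ ℕ,
      (∏ j : Fin r, v (d' (Sum.inl j)) (d' (Sum.inr j)))
        = v (d' (Sum.inl i)) (d' (Sum.inr i))
          * ∏ j ∈ Finset.univ.erase i, v (d' (Sum.inl j)) (d' (Sum.inr j)) :=
    fun d' => (Finset.mul_prod_erase Finset.univ _ (Finset.mem_univ i)).symm
  rw [e1, e1]
  have hC : ∀ j ∈ Finset.univ.erase i,
      v ((d - Finsupp.single (Sum.inr i) 1 : (Fin r ⊕ Fin r) →₀ ℕ) (Sum.inl j))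
        ((d - Finsupp.single (Sum.inr i) 1 : (Fin r ⊕ Fin r) →₀ ℕ) (Sum.inr j))
      = v (d (Sum.inl j)) (d (Sum.inr j)) := by
    intro j hj
    have hji : j ≠ i := (Finset.mem_erase.mp hj).1
    rw [Finsupp.tsub_apply, Finsupp.tsub_apply,
      Finsupp.single_eq_of_ne (by simp),
      Finsupp.single_eq_of_ne' (by simp [Ne.symm hji])]
    simp
  have hC' : ∀ j ∈ Finset.univ.erase i,
      v ((d + Finsupp.single (Sum.inl i) 1 : (Fin r ⊕ Fin r) →₀ ℕ) (Sum.inl j))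
        ((d + Finsupp.single (Sum.inl i) 1 : (Fin r ⊕ Fin r) →₀ ℕ) (Sum.inr j))
      = v (d (Sum.inl j)) (d (Sum.inr j)) := by
    intro j hj
    have hji : j ≠ i := (Finset.mem_erase.mp hj).1
    rw [Finsupp.add_apply, Finsupp.add_apply,
      Finsupp.single_eq_of_ne' (by simp [Ne.symm hji]),
      Finsupp.single_eq_of_ne (by simp)]
    simp
  rw [Finset.prod_congr rfl hC, Finset.prod_congr rfl hC']
  have h1 : (d - Finsupp.single (Sum.inr i) 1 : (Fin r ⊕ Fin r) →₀ ℕ) (Sum.inr i)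
      = d (Sum.inr i) - 1 := by
    rw [Finsupp.tsub_apply, Finsupp.single_eq_same]
  have h2 : (d - Finsupp.single (Sum.inr i) 1 : (Fin r ⊕ Fin r) →₀ ℕ) (Sum.inl i)
      = d (Sum.inl i) := by
    rw [Finsupp.tsub_apply, Finsupp.single_eq_of_ne (by simp)]; simp
  have h3 : (d + Finsupp.single (Sum.inl i) 1 : (Fin r ⊕ Fin r) →₀ ℕ) (Sum.inr i)
      = d (Sum.inr i) := by
    rw [Finsupp.add_apply, Finsupp.single_eq_of_ne (by simp)]; simp
  have h4 : (d + Finsupp.single (Sum.inl i) 1 : (Fin r ⊕ Fin r) →₀ ℕ) (Sum.inl i)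
      = d (Sum.inl i) + 1 := by
    rw [Finsupp.add_apply, Finsupp.single_eq_same]
  rw [h1, h2, h3, h4]
  calc _ = ((d (Sum.inr i) : ℂ) * v (d (Sum.inl i)) (d (Sum.inr i) - 1)
        + v (d (Sum.inl i) + 1) (d (Sum.inr i)))
        * ∏ j ∈ Finset.univ.erase i, v (d (Sum.inl j)) (d (Sum.inr j)) := by ring
    _ = 0 := by rw [local_id']; ring

noncomputable def φ (r : ℕ) : MvPolynomial (Fin r ⊕ Fin r) ℂ →ₗ[ℂ] ℂ :=
  Finsupp.linearCombination ℂ (w r) ∘ₗ (AddMonoidAlgebra.coeffLinearEquiv ℂ).toLinearMap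

lemma φ_monomial (r : ℕ) (d : (Fin r ⊕ Fin r) →₀ ℕ) (c : ℂ) :
    φ r (monomial d c) = c * w r d := by
  rw [← single_eq_monomial]
  show Finsupp.linearCombination ℂ (w r) (Finsupp.single d c) = c * w r d
  rw [Finsupp.linearCombination_single, smul_eq_mul]

lemma φ_one (r : ℕ) : φ r (1 : MvPolynomial (Fin r ⊕ Fin r) ℂ) = 1 := by
  have : (1 : MvPolynomial (Fin r ⊕ Fin r) ℂ) = monomial 0 1 := by
    rw [← C_1, C_apply]
  rw [this, φ_monomial, w_zero, mul_one]

lemma φ_D (r : ℕ) (i : Fin r) (p : MvPolynomial (Fin r ⊕ Fin r) ℂ) :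
    φ r (pderiv (Sum.inl i) p + X (Sum.inr i) * p) = 0 := by
  induction p using MvPolynomial.induction_on' with
  | monomial u a =>
    rw [pderiv_monomial]
    have hX : (X (Sum.inr i) : MvPolynomial (Fin r ⊕ Fin r) ℂ) * monomial u a
        = monomial (u + Finsupp.single (Sum.inr i) 1) a := by
      rw [X, monomial_mul, one_mul, add_comm]
    rw [hX, map_add, φ_monomial, φ_monomial]
    have := key_D r u i
    calc a * (u (Sum.inl i) : ℂ) * w r (u - Finsupp.single (Sum.inl i) 1)
          + a * w r (u + Finsupp.single (Sum.inr i) 1)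
        = a * ((u (Sum.inl i) : ℂ) * w r (u - Finsupp.single (Sum.inl i) 1)
          + w r (u + Finsupp.single (Sum.inr i) 1)) := by ring
      _ = 0 := by rw [this, mul_zero]
  | add p q hp hq =>
    have : pderiv (Sum.inl i) (p + q) + X (Sum.inr i) * (p + q)
        = (pderiv (Sum.inl i) p + X (Sum.inr i) * p)
          + (pderiv (Sum.inl i) q + X (Sum.inr i) * q) := by
      rw [map_add]; ring
    rw [this, map_add, hp, hq, add_zero]

lemma φ_E (r : ℕ) (i : Fin r) (p : MvPolynomial (Fin r ⊕ Fin r) ℂ) :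
    φ r (pderiv (Sum.inr i) p + X (Sum.inl i) * p) = 0 := by
  induction p using MvPolynomial.induction_on' with
  | monomial u a =>
    rw [pderiv_monomial]
    have hX : (X (Sum.inl i) : MvPolynomial (Fin r ⊕ Fin r) ℂ) * monomial u a
        = monomial (u + Finsupp.single (Sum.inl i) 1) a := by
      rw [X, monomial_mul, one_mul, add_comm]
    rw [hX, map_add, φ_monomial, φ_monomial]
    have := key_E r u i
    calc a * (u (Sum.inr i) : ℂ) * w r (u - Finsupp.single (Sum.inr i) 1)
          + a * w r (u + Finsupp.single (Sum.inl i) 1)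
        = a * ((u (Sum.inr i) : ℂ) * w r (u - Finsupp.single (Sum.inr i) 1)
          + w r (u + Finsupp.single (Sum.inl i) 1)) := by ring
      _ = 0 := by rw [this, mul_zero]
  | add p q hp hq =>
    have : pderiv (Sum.inr i) (p + q) + X (Sum.inl i) * (p + q)
        = (pderiv (Sum.inr i) p + X (Sum.inl i) * p)
          + (pderiv (Sum.inr i) q + X (Sum.inl i) * q) := by
      rw [map_add]; ring
    rw [this, map_add, hp, hq, add_zero]

/-- total degree of an exponent vector -/
def deg {r : ℕ} (d : (Fin r ⊕ Fin r) →₀ ℕ) : ℕ := ∑ x : Fin r ⊕ Fin r, d x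

lemma deg_sub_le {r : ℕ} (d : (Fin r ⊕ Fin r) →₀ ℕ) (x : Fin r ⊕ Fin r) :
    deg (d - Finsupp.single x 1) ≤ deg d :=
  Finset.sum_le_sum fun y _ => by rw [Finsupp.tsub_apply]; exact Nat.sub_le _ _

lemma deg_sub_lt {r : ℕ} (d : (Fin r ⊕ Fin r) →₀ ℕ) (x : Fin r ⊕ Fin r)
    (h : d x ≠ 0) : deg (d - Finsupp.single x 1) < deg d := by
  unfold deg
  rw [← Finset.add_sum_erase Finset.univ (fun y => d y) (Finset.mem_univ x),
      ← Finset.add_sum_erase Finset.univ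
        (fun y => (d - Finsupp.single x 1 : (Fin r ⊕ Fin r) →₀ ℕ) y) (Finset.mem_univ x)]
  have hx : (d - Finsupp.single x 1 : (Fin r ⊕ Fin r) →₀ ℕ) x = d x - 1 := by
    rw [Finsupp.tsub_apply, Finsupp.single_eq_same]
  have hrest : ∀ y ∈ Finset.univ.erase x,
      (d - Finsupp.single x 1 : (Fin r ⊕ Fin r) →₀ ℕ) y = d y := by
    intro y hy
    rw [Finsupp.tsub_apply, Finsupp.single_eq_of_ne' (Ne.symm (Finset.mem_erase.mp hy).1)]
    simp
  rw [hx, Finset.sum_congr rfl hrest]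
  exact Nat.add_lt_add_right (Nat.sub_lt (Nat.pos_of_ne_zero h) one_pos) _

lemma deg_eq_zero {r : ℕ} (d : (Fin r ⊕ Fin r) →₀ ℕ) (h : deg d = 0) : d = 0 := by
  ext x
  have := Finset.sum_eq_zero_iff.mp h x (Finset.mem_univ x)
  simpa using this

end KoszulAux

open KoszulAux

/-- On `P = ℂ[y₁,…,y_r,z₁,…,z_r]` with operators `D_i = ∂/∂yᵢ + zᵢ·` and
`E_i = ∂/∂zᵢ + yᵢ·`, the ring `P` is the internal direct sum of
`Σᵢ range D_i + Σᵢ range E_i` and the line `ℂ·1`. -/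
theorem koszul_top_cohomology_rank_r
    (r : ℕ) (hr : 1 ≤ r)
    (D E : Fin r →
      (MvPolynomial (Fin r ⊕ Fin r) ℂ →ₗ[ℂ] MvPolynomial (Fin r ⊕ Fin r) ℂ))
    (hD : ∀ (i : Fin r) (p : MvPolynomial (Fin r ⊕ Fin r) ℂ),
      D i p = pderiv (Sum.inl i) p + X (Sum.inr i) * p)
    (hE : ∀ (i : Fin r) (p : MvPolynomial (Fin r ⊕ Fin r) ℂ),
      E i p = pderiv (Sum.inr i) p + X (Sum.inl i) * p) :
    (((⨆ i, LinearMap.range (D i)) ⊔ (⨆ i, LinearMap.range (E i))) ⊓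
        Submodule.span ℂ {(1 : MvPolynomial (Fin r ⊕ Fin r) ℂ)} = ⊥) ∧
    (((⨆ i, LinearMap.range (D i)) ⊔ (⨆ i, LinearMap.range (E i))) ⊔
        Submodule.span ℂ {(1 : MvPolynomial (Fin r ⊕ Fin r) ℂ)} = ⊤) := by
  set P := MvPolynomial (Fin r ⊕ Fin r) ℂ
  set S : Submodule ℂ P :=
    (⨆ i, LinearMap.range (D i)) ⊔ (⨆ i, LinearMap.range (E i)) with hS
  have hSker : S ≤ LinearMap.ker (φ r) := by
    apply sup_le
    · apply iSup_le
      intro i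
      rintro _ ⟨p, rfl⟩
      rw [LinearMap.mem_ker, hD i p]
      exact φ_D r i p
    · apply iSup_le
      intro i
      rintro _ ⟨p, rfl⟩
      rw [LinearMap.mem_ker, hE i p]
      exact φ_E r i p
  constructor
  · -- trivial intersection
    rw [eq_bot_iff]
    rintro x ⟨hxS, hx1⟩
    obtain ⟨c, rfl⟩ := Submodule.mem_span_singleton.mp hx1
    have h0 : φ r (c • (1 : P)) = 0 := hSker hxS
    rw [map_smul, φ_one, smul_eq_mul, mul_one] at h0
    subst h0
    simp
  · -- spanning
    set T : Submodule ℂ P := S ⊔ Submodule.span ℂ {(1 : P)} with hT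
    have hone : (1 : P) ∈ T :=
      le_sup_right (α := Submodule ℂ P)
        (Submodule.mem_span_singleton_self 1)
    have main : ∀ (n : ℕ) (d : (Fin r ⊕ Fin r) →₀ ℕ), deg d ≤ n →
        ∀ c : ℂ, (monomial d c : P) ∈ T := by
      intro n
      induction n with
      | zero =>
        intro d hd c
        have hd0 : d = 0 := deg_eq_zero d (Nat.le_zero.mp hd)
        subst hd0
        have : (monomial 0 c : P) = c • (1 : P) := by
          rw [← C_apply, MvPolynomial.smul_eq_C_mul, mul_one]
        rw [this]
        exact Submodule.smul_mem T c hone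
      | succ n ih =>
        intro d hd c
        by_cases hd0 : d = 0
        · subst hd0
          have : (monomial 0 c : P) = c • (1 : P) := by
            rw [← C_apply, MvPolynomial.smul_eq_C_mul, mul_one]
          rw [this]
          exact Submodule.smul_mem T c hone
        · obtain ⟨x, hx⟩ := Finsupp.ne_iff.mp hd0
          have hx : d x ≠ 0 := by simpa using hx
          have hle : Finsupp.single x 1 ≤ d :=
            Finsupp.single_le_iff.mpr (Nat.one_le_iff_ne_zero.mpr hx)
          set d' : (Fin r ⊕ Fin r) →₀ ℕ := d - Finsupp.single x 1 with hd'
          have hadd : d' + Finsupp.single x 1 = d := tsub_add_cancel_of_le hle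
          have hdeg' : deg d' ≤ n := by
            have h2 := deg_sub_lt d x hx
            rw [← hd'] at h2
            omega
          cases x with
          | inl i =>
            -- use E i
            have heq : E i (monomial d' c)
                = monomial (d' - Finsupp.single (Sum.inr i) 1) (c * (d' (Sum.inr i) : ℂ))
                  + monomial d c := by
              rw [hE i, pderiv_monomial]
              congr 1
              rw [X, monomial_mul, one_mul, add_comm, hadd]
            have h1 : (monomial d c : P)
                = E i (monomial d' c)
                  - monomial (d' - Finsupp.single (Sum.inr i) 1)
                      (c * (d' (Sum.inr i) : ℂ)) := by
              rw [heq]; ring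
            rw [h1]
            apply Submodule.sub_mem T
            · refine le_sup_left (α := Submodule ℂ P) ?_
              refine le_sup_right (α := Submodule ℂ P) ?_
              exact le_iSup (fun i => LinearMap.range (E i)) i ⟨monomial d' c, rfl⟩
            · exact ih _ (le_trans (deg_sub_le d' _) hdeg') _
          | inr i =>
            -- use D i
            have heq : D i (monomial d' c)
                = monomial (d' - Finsupp.single (Sum.inl i) 1) (c * (d' (Sum.inl i) : ℂ))
                  + monomial d c := by
              rw [hD i, pderiv_monomial]
              congr 1
              rw [X, monomial_mul, one_mul, add_comm, hadd]
            have h1 : (monomial d c : P)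
                = D i (monomial d' c)
                  - monomial (d' - Finsupp.single (Sum.inl i) 1)
                      (c * (d' (Sum.inl i) : ℂ)) := by
              rw [heq]; ring
            rw [h1]
            apply Submodule.sub_mem T
            · refine le_sup_left (α := Submodule ℂ P) ?_
              refine le_sup_left (α := Submodule ℂ P) ?_
              exact le_iSup (fun i => LinearMap.range (D i)) i ⟨monomial d' c, rfl⟩
            · exact ih _ (le_trans (deg_sub_le d' _) hdeg') _
    rw [eq_top_iff]
    intro p _
    induction p using MvPolynomial.induction_on' with
    | monomial u a => exact main (deg u) u le_rfl a
    | add p q hp hq => exact Submodule.add_mem _ (hp trivial) (hq trivial)
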